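/- Let C be a maximal independent set of plane-solid flags of PG(6,q). (i) For every solid S there exists a linear subspace U ⊆ S such that for every plane E ⊆ S one has (E,S) ∈ C if and only if U ⊆ E. (ii) For every plane E there exists a linear subspace U of V with E ⊆ U such that for every solid S with E ⊆ S one has (E,S) ∈ C if and only if S ⊆ U. -/

import Mathlib

/-!
By maximality, a flag `(E, S)` lies in `C` iff it is in general position with no member of `C`.
Fix a solid `S`. A member `g` whose plane misses `S` has `g.1` complementary to `S`, so by
modularity the covering `g.1 ⋖ g.2` becomes `⊥ ⋖ S ⊓ g.2`: this is a point, and `(E, S)` fails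
to be in general position with `g` iff `E` contains it. Hence `U` is the span of these points.
Dually, fix a plane `E`. For a member `g` whose solid misses `E`, the covering `E ⋖ S` shows that
`S` meets `g.1` iff `S ≤ E ⊔ g.1`, so `U` is the intersection of these hyperplanes `E ⊔ g.1`.
-/

variable {F V : Type*} [Field F] [AddCommGroup V] [Module F V]

/-- A plane-solid flag of PG(6,q): a pair (E,S) with E a plane (3-dim subspace),
S a solid (4-dim subspace) and E ⊆ S. -/
def IsFlag (f : Submodule F V × Submodule F V) : Prop :=
  Module.finrank F f.1 = 3 ∧ Module.finrank F f.2 = 4 ∧ f.1 ≤ f.2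

/-- Two flags are in general position if E ∩ S' = 0 and E' ∩ S = 0. -/
def GenPos (f g : Submodule F V × Submodule F V) : Prop :=
  f.1 ⊓ g.2 = ⊥ ∧ g.1 ⊓ f.2 = ⊥

/-- An independent set of plane-solid flags: a set of flags no two distinct members
of which are in general position. -/
def IsIndep (C : Set (Submodule F V × Submodule F V)) : Prop :=
  (∀ f ∈ C, IsFlag f) ∧ ∀ f ∈ C, ∀ g ∈ C, f ≠ g → ¬ GenPos f g

/-- A maximal independent set of plane-solid flags. -/
def IsMaxIndep (C : Set (Submodule F V × Submodule F V)) : Prop :=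
  IsIndep C ∧ ∀ D : Set (Submodule F V × Submodule F V), IsIndep D → C ⊆ D → C = D

section ModularLattice

variable {α : Type*} [Lattice α] [BoundedOrder α] [IsModularLattice α] {a b c : α}

theorem IsCompl.isAtom_inf_of_covBy (hac : IsCompl a c) (hab : a ⋖ b) : IsAtom (c ⊓ b) := by
  have hb : a ⊔ c ⊓ b = b := by
    rw [← sup_inf_assoc_of_le c hab.le, hac.sup_eq_top, top_inf_eq]
  have hcov := inf_covBy_of_covBy_sup_left (hb.symm ▸ hab : a ⋖ a ⊔ c ⊓ b)
  rwa [← inf_assoc, hac.inf_eq_bot, bot_inf_eq, bot_covBy_iff] at hcov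

theorem CovBy.not_disjoint_iff_le_sup (hab : a ⋖ b) (hac : Disjoint a c) :
    ¬ Disjoint b c ↔ b ≤ a ⊔ c := by
  have hmod : (a ⊔ c) ⊓ b = a ⊔ b ⊓ c := by rw [sup_inf_assoc_of_le c hab.le, inf_comm]
  constructor
  · intro hbc
    rcases hab.eq_or_eq le_sup_left (sup_le hab.le inf_le_left : a ⊔ b ⊓ c ≤ b) with h | h
    · refine absurd (disjoint_iff_inf_le.mpr ?_) hbc
      exact (le_inf (h ▸ le_sup_right) inf_le_right).trans hac.le_bot
    · exact h ▸ sup_le_sup_left inf_le_right a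
  · intro hb hbc
    rw [inf_eq_right.mpr hb, disjoint_iff.mp hbc, sup_bot_eq] at hmod
    exact hab.lt.ne hmod.symm

end ModularLattice

theorem Submodule.covBy_of_finrank_eq_add_one {K M : Type*} [DivisionRing K] [AddCommGroup M]
    [Module K M] [FiniteDimensional K M] {p q : Submodule K M} (hpq : p ≤ q)
    (hq : Module.finrank K q = Module.finrank K p + 1) : p ⋖ q := by
  refine ⟨hpq.lt_of_ne fun h => by subst h; omega, fun r hpr hrq => ?_⟩
  have := Submodule.finrank_lt_finrank_of_lt hpr
  have := Submodule.finrank_lt_finrank_of_lt hrq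
  omega

theorem GenPos.symm {f g : Submodule F V × Submodule F V} (h : GenPos f g) : GenPos g f :=
  ⟨h.2, h.1⟩

theorem IsFlag.not_genPos_self {f : Submodule F V × Submodule F V} (hf : IsFlag f) :
    ¬ GenPos f f := by
  intro h
  have hbot : f.1 = ⊥ := by simpa only [inf_eq_left.mpr hf.2.2] using h.1
  have := hf.1
  rw [hbot, finrank_bot] at this
  omega

theorem IsFlag.covBy [FiniteDimensional F V] {f : Submodule F V × Submodule F V}
    (hf : IsFlag f) : f.1 ⋖ f.2 :=
  Submodule.covBy_of_finrank_eq_add_one hf.2.2 (by rw [hf.1, hf.2.1])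

theorem IsMaxIndep.mem_iff {C : Set (Submodule F V × Submodule F V)} (hC : IsMaxIndep C)
    {f : Submodule F V × Submodule F V} (hf : IsFlag f) :
    f ∈ C ↔ ∀ g ∈ C, ¬ GenPos f g := by
  refine ⟨fun hfC g hg hfg => ?_, fun h => ?_⟩
  · obtain rfl | hne := eq_or_ne f g
    · exact hf.not_genPos_self hfg
    · exact hC.1.2 f hfC g hg hne hfg
  · have hD : IsIndep (insert f C) := by
      refine ⟨Set.forall_mem_insert.mpr ⟨hf, hC.1.1⟩, ?_⟩
      rintro a (rfl | ha) b (rfl | hb) hab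
      · exact (hab rfl).elim
      · exact h b hb
      · exact fun hgp => h a ha hgp.symm
      · exact hC.1.2 a ha b hb hab
    exact (hC.2 _ hD (Set.subset_insert f C)).symm ▸ Set.mem_insert f C

theorem IsMaxIndep.exists_mem_iff_le_of_solid [FiniteDimensional F V]
    (hV : Module.finrank F V = 7) {C : Set (Submodule F V × Submodule F V)} (hC : IsMaxIndep C)
    {S : Submodule F V} (hS : Module.finrank F S = 4) :
    ∃ U ≤ S, ∀ E : Submodule F V, Module.finrank F E = 3 → E ≤ S → ((E, S) ∈ C ↔ U ≤ E) := by
  refine ⟨⨆ g ∈ C, ⨆ (_ : g.1 ⊓ S = ⊥), S ⊓ g.2,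
    iSup₂_le fun _ _ => iSup_le fun _ => inf_le_left, fun E hE hES => ?_⟩
  rw [hC.mem_iff (f := (E, S)) ⟨hE, hS, hES⟩]
  simp only [iSup_le_iff]
  refine forall₂_congr fun g hg => ?_
  by_cases hgS : g.1 ⊓ S = ⊥
  · have hcompl : IsCompl g.1 S :=
      (Submodule.isCompl_iff_disjoint _ _ (by rw [hV, (hC.1.1 g hg).1, hS])).mpr
        (disjoint_iff.mpr hgS)
    rw [← (hcompl.isAtom_inf_of_covBy (hC.1.1 g hg).covBy).not_disjoint_iff_le, disjoint_iff,
      inf_right_comm, inf_eq_right.mpr hES]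
    simp [GenPos, hgS]
  · simp [GenPos, hgS]

theorem IsMaxIndep.exists_mem_iff_le_of_plane [FiniteDimensional F V]
    {C : Set (Submodule F V × Submodule F V)} (hC : IsMaxIndep C)
    {E : Submodule F V} (hE : Module.finrank F E = 3) :
    ∃ U, E ≤ U ∧ ∀ S : Submodule F V, Module.finrank F S = 4 → E ≤ S →
      ((E, S) ∈ C ↔ S ≤ U) := by
  refine ⟨⨅ g ∈ C, ⨅ (_ : E ⊓ g.2 = ⊥), E ⊔ g.1,
    le_iInf₂ fun _ _ => le_iInf fun _ => le_sup_left, fun S hS hES => ?_⟩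
  rw [hC.mem_iff (f := (E, S)) ⟨hE, hS, hES⟩]
  simp only [le_iInf_iff]
  refine forall₂_congr fun g hg => ?_
  by_cases hEg : E ⊓ g.2 = ⊥
  · have hdisj : Disjoint E g.1 :=
      disjoint_iff.mpr (le_bot_iff.mp (hEg ▸ inf_le_inf_left E (hC.1.1 g hg).2.2))
    have hcov : E ⋖ S := Submodule.covBy_of_finrank_eq_add_one hES (by rw [hS, hE])
    rw [← hcov.not_disjoint_iff_le_sup hdisj, disjoint_comm, disjoint_iff]
    simp [GenPos, hEg]
  · simp [GenPos, hEg]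

theorem stmt18_general [FiniteDimensional F V]
    (hV : Module.finrank F V = 7)
    (C : Set (Submodule F V × Submodule F V)) (hC : IsMaxIndep C) :
    (∀ S : Submodule F V, Module.finrank F S = 4 →
      ∃ U : Submodule F V, U ≤ S ∧
        ∀ E : Submodule F V, Module.finrank F E = 3 → E ≤ S →
          ((E, S) ∈ C ↔ U ≤ E)) ∧
    (∀ E : Submodule F V, Module.finrank F E = 3 →
      ∃ U : Submodule F V, E ≤ U ∧
        ∀ S : Submodule F V, Module.finrank F S = 4 → E ≤ S →
          ((E, S) ∈ C ↔ S ≤ U)) :=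
  ⟨fun _ hS => hC.exists_mem_iff_le_of_solid hV hS,
    fun _ hE => hC.exists_mem_iff_le_of_plane hE⟩

theorem stmt18 {q : ℕ} [Fintype F] [FiniteDimensional F V]
    (hq : Fintype.card F = q) (hV : Module.finrank F V = 7)
    (C : Set (Submodule F V × Submodule F V)) (hC : IsMaxIndep C) :
    (∀ S : Submodule F V, Module.finrank F S = 4 →
      ∃ U : Submodule F V, U ≤ S ∧
        ∀ E : Submodule F V, Module.finrank F E = 3 → E ≤ S →
          ((E, S) ∈ C ↔ U ≤ E)) ∧
    (∀ E : Submodule F V, Module.finrank F E = 3 →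
      ∃ U : Submodule F V, E ≤ U ∧
        ∀ S : Submodule F V, Module.finrank F S = 4 → E ≤ S →
          ((E, S) ∈ C ↔ S ≤ U)) :=
  stmt18_general hV C hC
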